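/- arXiv:1708.07580 — 2 statements merged into one kernel-verified Lean document; each statement's English description precedes it below -/
import Mathlib

section
/- For any real number q > 0 and any profile of linear orders, a committee W of size k satisfies generalised weak q-PSC if and only if it satisfies weak q-PSC. -/
/-!
A voter of a solid coalition for `C'` ranks every candidate outside `C'` strictly below all of
`C'`, hence outside her top `|C'|`; so the candidates witnessing generalised weak `q`-PSC already
lie in `W ∩ C'`. Conversely, under antisymmetric preferences a generalised solid coalition is
solid, and any of its members (there is one, as `ℓ q > 0`) has all of `C'` within her top `|C'|`,
so `W ∩ C'` itself is a witness.
-/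

variable {V C : Type*}

/-- Strict part of a weak preference relation. -/
def StrictPref (R : C → C → Prop) (a b : C) : Prop :=
  R a b ∧ ¬ R b a

/-- A complete and transitive preference relation (total preorder). -/
def TotalPreorderRel (R : C → C → Prop) : Prop :=
  Total R ∧ Transitive R

/-- A linear order (strict preferences): complete, transitive and antisymmetric. -/
def LinearPrefRel (R : C → C → Prop) : Prop :=
  Total R ∧ Transitive R ∧ ∀ a b : C, R a b → R b a → a = b

/-- A dichotomous preference: a total preorder with at most two indifference classes
(equivalently, no strict chain of length three). -/
def DichotomousPref (R : C → C → Prop) : Prop :=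
  TotalPreorderRel R ∧ ∀ a b c : C, StrictPref R a b → ¬ StrictPref R b c

/-- `N'` is a solid coalition for `C'`: every voter in `N'` strictly prefers every
candidate in `C'` to every candidate outside `C'`. -/
def SolidCoalition (R : V → C → C → Prop) (N' : Finset V) (C' : Finset C) : Prop :=
  ∀ i ∈ N', ∀ c' ∈ C', ∀ c : C, c ∉ C' → StrictPref (R i) c' c

/-- `N'` is a generalised solid coalition for `C'`: every voter in `N'` weakly prefers
every candidate in `C'` to every candidate outside `C'`. -/
def GenSolidCoalition (R : V → C → C → Prop) (N' : Finset V) (C' : Finset C) : Prop :=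
  ∀ i ∈ N', ∀ c' ∈ C', ∀ c : C, c ∉ C' → R i c' c

/-- Candidate `c` is within voter `i`'s top `t` positions:
fewer than `t` candidates are strictly preferred to `c`. -/
def WithinTop (R : C → C → Prop) (c : C) (t : ℕ) : Prop :=
  ({d : C | StrictPref R d c}).ncard < t

/-- `W` satisfies q-PSC. -/
def QPSC [DecidableEq C] (R : V → C → C → Prop) (W : Finset C) (q : ℝ) : Prop :=
  ∀ ℓ : ℕ, 0 < ℓ → ∀ N' : Finset V, ∀ C' : Finset C,
    SolidCoalition R N' C' → (ℓ : ℝ) * q ≤ (N'.card : ℝ) →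
    min ℓ C'.card ≤ (W ∩ C').card

/-- `W` satisfies weak q-PSC. -/
def WeakQPSC [DecidableEq C] (R : V → C → C → Prop) (W : Finset C) (q : ℝ) : Prop :=
  ∀ ℓ : ℕ, 0 < ℓ → ∀ N' : Finset V, ∀ C' : Finset C,
    C'.card ≤ ℓ → SolidCoalition R N' C' → (ℓ : ℝ) * q ≤ (N'.card : ℝ) →
    min ℓ C'.card ≤ (W ∩ C').card

/-- `W` satisfies generalised q-PSC. -/
def GenQPSC (R : V → C → C → Prop) (W : Finset C) (q : ℝ) : Prop :=
  ∀ ℓ : ℕ, 0 < ℓ → ∀ N' : Finset V, ∀ C' : Finset C,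
    GenSolidCoalition R N' C' → (ℓ : ℝ) * q ≤ (N'.card : ℝ) →
    ∃ C'' : Finset C, C'' ⊆ W ∧ min ℓ C'.card ≤ C''.card ∧
      ∀ c'' ∈ C'', ∃ i ∈ N', WithinTop (R i) c'' C'.card

/-- `W` satisfies generalised weak q-PSC. -/
def GenWeakQPSC (R : V → C → C → Prop) (W : Finset C) (q : ℝ) : Prop :=
  ∀ ℓ : ℕ, 0 < ℓ → ∀ N' : Finset V, ∀ C' : Finset C,
    C'.card ≤ ℓ → GenSolidCoalition R N' C' → (ℓ : ℝ) * q ≤ (N'.card : ℝ) →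
    ∃ C'' : Finset C, C'' ⊆ W ∧ min ℓ C'.card ≤ C''.card ∧
      ∀ c'' ∈ C'', ∃ i ∈ N', WithinTop (R i) c'' C'.card

theorem SolidCoalition.genSolidCoalition {R : V → C → C → Prop} {N' : Finset V} {C' : Finset C}
    (h : SolidCoalition R N' C') : GenSolidCoalition R N' C' :=
  fun i hi c' hc' c hc => (h i hi c' hc' c hc).1

theorem GenSolidCoalition.solidCoalition {R : V → C → C → Prop} {N' : Finset V}
    {C' : Finset C} (hanti : ∀ i a b, R i a b → R i b a → a = b)
    (h : GenSolidCoalition R N' C') : SolidCoalition R N' C' :=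
  fun i hi c' hc' c hc =>
    ⟨h i hi c' hc' c hc, fun hcc' => hc (hanti i c' c (h i hi c' hc' c hc) hcc' ▸ hc')⟩

theorem Finset.nonempty_of_mul_le_card {N' : Finset V} {ℓ : ℕ} {q : ℝ} (hℓ : 0 < ℓ)
    (hq : 0 < q) (h : (ℓ : ℝ) * q ≤ N'.card) : N'.Nonempty := by
  rw [← Finset.card_pos, ← Nat.cast_pos (α := ℝ)]
  exact (mul_pos (Nat.cast_pos.mpr hℓ) hq).trans_le h

theorem not_withinTop_of_forall_strictPref [Finite C] {R : C → C → Prop} {c : C}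
    {C' : Finset C} (h : ∀ d ∈ C', StrictPref R d c) : ¬ WithinTop R c C'.card := by
  have hsub : (C' : Set C) ⊆ {d | StrictPref R d c} := h
  unfold WithinTop
  rw [not_lt, ← Set.ncard_coe_finset]
  exact Set.ncard_le_ncard hsub

theorem withinTop_card_of_mem {R : C → C → Prop} {c : C} {C' : Finset C} (hc : c ∈ C')
    (h : ∀ d ∉ C', R c d) : WithinTop R c C'.card := by
  classical
  have hsub : {d | StrictPref R d c} ⊆ (C'.erase c : Set C) := by
    intro d ⟨hdc, hcd⟩
    refine Finset.mem_erase.mpr ⟨?_, ?_⟩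
    · rintro rfl
      exact hcd hdc
    · by_contra hd
      exact hcd (h d hd)
  calc {d | StrictPref R d c}.ncard ≤ (C'.erase c).card := by
        rw [← Set.ncard_coe_finset]
        exact Set.ncard_le_ncard hsub
    _ < C'.card := Finset.card_erase_lt_of_mem hc

section

variable [DecidableEq C] {R : V → C → C → Prop} {W : Finset C} {q : ℝ}

theorem GenWeakQPSC.weakQPSC [Finite C] (h : GenWeakQPSC R W q) : WeakQPSC R W q := by
  intro ℓ hℓ N' C' hcard hsolid hN'
  obtain ⟨C'', hC''W, hC''card, hC''top⟩ := h ℓ hℓ N' C' hcard hsolid.genSolidCoalition hN'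
  have hsub : C'' ⊆ W ∩ C' := by
    intro c hc
    refine Finset.mem_inter.mpr ⟨hC''W hc, ?_⟩
    obtain ⟨i, hi, htop⟩ := hC''top c hc
    by_contra hcC'
    exact not_withinTop_of_forall_strictPref (fun d hd => hsolid i hi d hd c hcC') htop
  exact hC''card.trans (Finset.card_le_card hsub)

theorem WeakQPSC.genWeakQPSC (hanti : ∀ i a b, R i a b → R i b a → a = b) (hq : 0 < q)
    (h : WeakQPSC R W q) : GenWeakQPSC R W q := by
  intro ℓ hℓ N' C' hcard hgen hN'
  obtain ⟨i, hi⟩ := Finset.nonempty_of_mul_le_card hℓ hq hN'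
  refine ⟨W ∩ C', Finset.inter_subset_left, h ℓ hℓ N' C' hcard (hgen.solidCoalition hanti) hN',
    fun c hc => ⟨i, hi, ?_⟩⟩
  have hcC' := (Finset.mem_inter.mp hc).2
  exact withinTop_card_of_mem hcC' (hgen i hi c hcC')

end

theorem genWeakQPSC_iff_weakQPSC_of_linear_general
    {V C : Type*} [Fintype C] [DecidableEq C]
    (R : V → C → C → Prop) (hR : ∀ i : V, LinearPrefRel (R i))
    (W : Finset C)
    (q : ℝ) (hq : 0 < q) :
    GenWeakQPSC R W q ↔ WeakQPSC R W q :=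
  ⟨GenWeakQPSC.weakQPSC, WeakQPSC.genWeakQPSC (fun i => (hR i).2.2) hq⟩

/-- under linear orders, generalised weak q-PSC is equivalent to
weak q-PSC. -/
theorem genWeakQPSC_iff_weakQPSC_of_linear
    {V C : Type*} [Fintype V] [Fintype C] [DecidableEq C]
    (R : V → C → C → Prop) (hR : ∀ i : V, LinearPrefRel (R i))
    (k : ℕ) (hk1 : 1 ≤ k) (hkm : k ≤ Fintype.card C)
    (W : Finset C) (hW : W.card = k)
    (q : ℝ) (hq : 0 < q) :
    GenWeakQPSC R W q ↔ WeakQPSC R W q :=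
  genWeakQPSC_iff_weakQPSC_of_linear_general R hR W q hq
end

section
/- For every profile of total preorders of n voters over m candidates and every k with 1 ≤ k ≤ m, there exists a committee W ⊆ C with |W| = k that satisfies generalised Droop-PSC: for every positive integer ℓ and every generalised solid coalition N' supporting a set C' with |N'| > ℓ·n/(k+1), there exists C'' ⊆ W with |C''| ≥ min{ℓ, |C'|} such that every c'' ∈ C'' is within voter i's top |C'| for some i ∈ N'. -/
variable {V C : Type*}

/-- `W` satisfies generalised Droop-PSC. -/
def GenDroopPSC [Fintype V] (R : V → C → C → Prop) (W : Finset C) (k : ℕ) : Prop :=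
  ∀ ℓ : ℕ, 0 < ℓ → ∀ N' : Finset V, ∀ C' : Finset C,
    GenSolidCoalition R N' C' →
    (ℓ : ℝ) * (Fintype.card V : ℝ) / ((k : ℝ) + 1) < (N'.card : ℝ) →
    ∃ C'' : Finset C, C'' ⊆ W ∧ min ℓ C'.card ≤ C''.card ∧
      ∀ c'' ∈ C'', ∃ i ∈ N', WithinTop (R i) c'' C'.card

/-!
The committee is produced by the Expanding Approvals Rule with Droop quota `q = n / (k + 1)`.
Every voter starts with budget `1`; at stage `t` a voter approves the candidates within their top
`t`, and as long as some unelected candidate is approved by voters holding more than `q` in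
total, it is elected and those voters pay `q` between them. Since a purchase needs more than `q`
of the remaining `(k + 1 - |W|) * q`, at most `k` candidates are elected. A generalised solid
coalition `N'` for `C'` unanimously approves `C'` at stage `t = |C'|`; if after that stage some
member of `C'` is still unelected, `N'` keeps at most `q`, so having started with more than
`ℓ * q` it has paid for at least `ℓ` elected candidates, each approved by one of its members.
-/

open Finset

theorem GenSolidCoalition.withinTop {R : V → C → C → Prop} {N' : Finset V} {C' : Finset C}
    (hsol : GenSolidCoalition R N' C') {i : V} (hi : i ∈ N') {c : C} (hc : c ∈ C') :
    WithinTop (R i) c C'.card := by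
  classical
  have hsub : {d : C | StrictPref (R i) d c} ⊆ ↑(C'.erase c) := by
    rintro d ⟨hdc, hcd⟩
    have hdC' : d ∈ C' := by
      by_contra hd
      exact hcd (hsol i hi c hc d hd)
    exact mem_coe.2 (mem_erase.2 ⟨fun h => hcd (h ▸ hdc), hdC'⟩)
  calc {d : C | StrictPref (R i) d c}.ncard
      ≤ (↑(C'.erase c) : Set C).ncard := Set.ncard_le_ncard hsub (finite_toSet _)
    _ = (C'.erase c).card := Set.ncard_coe_finset _
    _ < C'.card := card_erase_lt_of_mem hc

theorem withinTop_monotone (R : V → C → C → Prop) :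
    Monotone fun t i c => WithinTop (R i) c t :=
  fun _ _ hst _ _ hc => lt_of_lt_of_le hc hst

theorem exists_deduct_of_le_sum [Fintype V] {b : V → ℝ} (hb : ∀ i, 0 ≤ b i) {q : ℝ} (hq : 0 ≤ q)
    (S : Finset V) (hS : q ≤ ∑ i ∈ S, b i) :
    ∃ b' : V → ℝ, (∀ i, 0 ≤ b' i ∧ b' i ≤ b i) ∧ (∀ i ∉ S, b' i = b i) ∧
      ∑ i, b' i = ∑ i, b i - q := by
  classical
  set r := q / ∑ i ∈ S, b i
  have hr0 : 0 ≤ r := div_nonneg hq (hq.trans hS)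
  have hr1 : r ≤ 1 := div_le_one_of_le₀ hS (hq.trans hS)
  refine ⟨fun i => b i - if i ∈ S then r * b i else 0, fun i => ?_, fun i hi => by simp [hi], ?_⟩
  · dsimp only
    split_ifs
    · constructor <;> nlinarith [hb i]
    · simpa using hb i
  · have hrq : r * ∑ i ∈ S, b i = q :=
      div_mul_cancel_of_imp fun h => le_antisymm (h ▸ hS) hq
    rw [sum_sub_distrib, ← sum_filter, filter_mem_eq_inter,
      univ_inter, ← mul_sum, hrq]

theorem sum_sub_le_sum_of_le [Fintype V] {b b' : V → ℝ} {q : ℝ} (hle : ∀ i, b' i ≤ b i)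
    (hsum : ∑ i, b' i = ∑ i, b i - q) (T : Finset V) :
    ∑ i ∈ T, b i - q ≤ ∑ i ∈ T, b' i := by
  have hT : ∑ i ∈ T, (b i - b' i) ≤ ∑ i, (b i - b' i) :=
    sum_le_sum_of_subset_of_nonneg (subset_univ T)
      fun i _ _ => sub_nonneg.2 (hle i)
  simp only [sum_sub_distrib] at hT
  linarith

def QuotaProportional (A : V → C → Prop) (q : ℝ) (W : Finset C) : Prop :=
  ∀ (ℓ : ℕ) (N' : Finset V) (C' : Finset C), ℓ * q < N'.card → (∀ c ∈ C', ∀ i ∈ N', A i c) →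
    ∃ C'' ⊆ W, min ℓ C'.card ≤ C''.card ∧ ∀ c ∈ C'', ∃ i ∈ N', A i c

theorem QuotaProportional.mono {A : V → C → Prop} {q : ℝ} {W W' : Finset C}
    (h : QuotaProportional A q W) (hW : W ⊆ W') : QuotaProportional A q W' :=
  fun ℓ N' C' hquota hC' =>
    let ⟨C'', hC''W, hcard, happ⟩ := h ℓ N' C' hquota hC'
    ⟨C'', hC''W.trans hW, hcard, happ⟩

section ExpandingApprovals

open scoped Classical

variable [Fintype V]

noncomputable def approvalSupport (A : V → C → Prop) (b : V → ℝ) (c : C) : ℝ :=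
  ∑ i ∈ univ.filter (A · c), b i

theorem approvalSupport_le_sum {A : V → C → Prop} {b : V → ℝ} (hb : ∀ i, 0 ≤ b i) (c : C) :
    approvalSupport A b c ≤ ∑ i, b i :=
  sum_le_sum_of_subset_of_nonneg (subset_univ _) fun i _ _ => hb i

theorem sum_le_approvalSupport {A : V → C → Prop} {b : V → ℝ} (hb : ∀ i, 0 ≤ b i)
    {N' : Finset V} {c : C} (hN' : ∀ i ∈ N', A i c) :
    ∑ i ∈ N', b i ≤ approvalSupport A b c :=
  sum_le_sum_of_subset_of_nonneg (fun i hi => mem_filter.2 ⟨mem_univ i, hN' i hi⟩)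
    fun i _ _ => hb i

/-- A state of the Expanding Approvals Rule with quota `q` during stage `j`, in which voters
approve `A j`: committee `W` and remaining budgets `b` (initially `1` each), every elected
candidate having cost `q`. The last field says that a group of voters has spent at most `q` per
elected candidate approved by one of its members, at stage `j` or any later one. -/
structure EARState (A : ℕ → V → C → Prop) (q : ℝ) (k j : ℕ) (W : Finset C) (b : V → ℝ) :
    Prop where
  budget_nonneg : ∀ i, 0 ≤ b i
  budget_sum : ∑ i, b i + W.card * q = (k + 1) * q
  card_le : W.card ≤ k
  coalition : ∀ t ≥ j, ∀ N' : Finset V,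
    (N'.card : ℝ) ≤ ∑ i ∈ N', b i + q * #{c ∈ W | ∃ i ∈ N', A t i c}

namespace EARState

variable {A : ℕ → V → C → Prop} {q : ℝ} {k j : ℕ} {W : Finset C} {b : V → ℝ}

theorem init (hn : (Fintype.card V : ℝ) = (k + 1) * q) : EARState A q k j ∅ 1 where
  budget_nonneg _ := zero_le_one
  budget_sum := by simp [hn]
  card_le := by simp
  coalition _ _ N' := by simp

theorem of_le (hs : EARState A q k j W b) {j' : ℕ} (hjj' : j ≤ j') : EARState A q k j' W b :=
  { hs with coalition := fun t ht => hs.coalition t (hjj'.trans ht) }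

theorem insert (hA : Monotone A) (hq : 0 ≤ q) (hs : EARState A q k j W b) {c : C} (hc : c ∉ W)
    (hsupp : q < approvalSupport (A j) b c) : ∃ b', EARState A q k j (insert c W) b' := by
  obtain ⟨b', hb', hb'S, hb'sum⟩ :=
    exists_deduct_of_le_sum hs.budget_nonneg hq (univ.filter (A j · c)) hsupp.le
  have hcard : W.card < k := by
    have hbq : q < ∑ i, b i := hsupp.trans_le (approvalSupport_le_sum hs.budget_nonneg c)
    by_contra! hk
    have hk' : (k : ℝ) ≤ W.card := by exact_mod_cast hk
    nlinarith [hs.budget_sum]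
  refine ⟨b', fun i => (hb' i).1, ?_, ?_, fun t ht N' => ?_⟩
  · rw [card_insert_of_notMem hc, hb'sum]
    push_cast
    linarith [hs.budget_sum]
  · rw [card_insert_of_notMem hc]
    exact hcard
  · have hN' := hs.coalition t ht N'
    rw [filter_insert]
    split_ifs with hcN'
    · have hpaid := sum_sub_le_sum_of_le (fun i => (hb' i).2) hb'sum N'
      rw [card_insert_of_notMem (by simp [hc])]
      push_cast
      linarith
    · have hunpaid : ∑ i ∈ N', b' i = ∑ i ∈ N', b i := by
        refine sum_congr rfl fun i hi => hb'S i ?_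
        simpa using fun hi' => hcN' ⟨i, hi, hA ht i c hi'⟩
      rwa [hunpaid]

theorem exists_stable (hA : Monotone A) (hq : 0 ≤ q) {W : Finset C} {b : V → ℝ}
    (hs : EARState A q k j W b) :
    ∃ W' b', W ⊆ W' ∧ EARState A q k j W' b' ∧ ∀ c ∉ W', approvalSupport (A j) b' c ≤ q := by
  by_cases h : ∃ c ∉ W, q < approvalSupport (A j) b c
  · obtain ⟨c, hc, hsupp⟩ := h
    obtain ⟨b', hs'⟩ := hs.insert hA hq hc hsupp
    obtain ⟨W'', b'', hsub, hs'', hstable⟩ := hs'.exists_stable hA hq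
    exact ⟨W'', b'', (subset_insert c W).trans hsub, hs'', hstable⟩
  · push Not at h
    exact ⟨W, b, subset_rfl, hs, h⟩
termination_by k - W.card
decreasing_by
  have := hs'.card_le
  rw [card_insert_of_notMem hc] at this ⊢
  omega

theorem quotaProportional (hq : 0 ≤ q) (hs : EARState A q k j W b)
    (hstable : ∀ c ∉ W, approvalSupport (A j) b c ≤ q) : QuotaProportional (A j) q W := by
  intro ℓ N' C' hquota hC'
  by_cases hC'W : C' ⊆ W
  · obtain ⟨i, hi⟩ : N'.Nonempty := by
      rw [← card_pos, ← Nat.cast_pos (α := ℝ)]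
      exact (mul_nonneg ℓ.cast_nonneg hq).trans_lt hquota
    exact ⟨C', hC'W, min_le_right _ _, fun c hc => ⟨i, hi, hC' c hc i hi⟩⟩
  · obtain ⟨c, hcC', hcW⟩ := not_subset.1 hC'W
    have hleft : ∑ i ∈ N', b i ≤ q :=
      (sum_le_approvalSupport hs.budget_nonneg (hC' c hcC')).trans (hstable c hcW)
    have hspent := hs.coalition j le_rfl N'
    refine ⟨_, filter_subset _ W, (min_le_left _ _).trans ?_, fun c hc => (mem_filter.1 hc).2⟩
    have hlt : (ℓ : ℝ) * q < (#{c ∈ W | ∃ i ∈ N', A j i c} + 1) * q := by linarith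
    exact Nat.lt_succ_iff.1 (by exact_mod_cast lt_of_mul_lt_mul_right hlt hq)

end EARState

theorem exists_EARState_quotaProportional {A : ℕ → V → C → Prop} (hA : Monotone A) {q : ℝ}
    (hq : 0 ≤ q) {k : ℕ} (hn : (Fintype.card V : ℝ) = (k + 1) * q) (T : ℕ) :
    ∃ W b, EARState A q k T W b ∧ ∀ t ≤ T, QuotaProportional (A t) q W := by
  induction T with
  | zero =>
    obtain ⟨W, b, -, hs, hstable⟩ := (EARState.init (A := A) (j := 0) hn).exists_stable hA hq
    exact ⟨W, b, hs, fun t ht => Nat.le_zero.1 ht ▸ hs.quotaProportional hq hstable⟩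
  | succ T ih =>
    obtain ⟨W, b, hs, hW⟩ := ih
    obtain ⟨W', b', hWW', hs', hstable⟩ := (hs.of_le T.le_succ).exists_stable hA hq
    refine ⟨W', b', hs', fun t ht => ?_⟩
    rcases Nat.le_succ_iff.1 ht with ht | rfl
    · exact (hW t ht).mono hWW'
    · exact hs'.quotaProportional hq hstable

end ExpandingApprovals

theorem exists_committee_genDroopPSC_general
    {V C : Type*} [Fintype V] [Fintype C]
    (R : V → C → C → Prop)
    (k : ℕ) (hkm : k ≤ Fintype.card C) :
    ∃ W : Finset C, W.card = k ∧ GenDroopPSC R W k := by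
  set q : ℝ := Fintype.card V / (k + 1)
  have hq : 0 ≤ q := by positivity
  have hn : (Fintype.card V : ℝ) = (k + 1) * q := by
    rw [mul_div_cancel₀ _ (by positivity)]
  obtain ⟨W₀, _, hs, hW₀⟩ := exists_EARState_quotaProportional (withinTop_monotone R) hq hn
    (Fintype.card C)
  obtain ⟨W, hW₀W, -, hWk⟩ :=
    exists_subsuperset_card_eq (subset_univ W₀) hs.card_le (by simpa using hkm)
  refine ⟨W, hWk, fun ℓ _ N' C' hsol hquota => ?_⟩
  refine (hW₀ C'.card (card_le_univ C') |>.mono hW₀W) ℓ N' C' ?_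
    fun c hc i hi => hsol.withinTop hi hc
  rwa [mul_div_assoc] at hquota

/-- for every profile of total preorders there exists a size-k
committee satisfying generalised Droop-PSC. -/
theorem exists_committee_genDroopPSC
    {V C : Type*} [Fintype V] [Fintype C] [DecidableEq C]
    (R : V → C → C → Prop) (hR : ∀ i : V, TotalPreorderRel (R i))
    (k : ℕ) (hk1 : 1 ≤ k) (hkm : k ≤ Fintype.card C) :
    ∃ W : Finset C, W.card = k ∧ GenDroopPSC R W k :=
  exists_committee_genDroopPSC_general R k hkm
end
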